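/- arXiv:2411.04745 — 2 statements merged into one kernel-verified Lean document; each statement's English description precedes it below -/
import Mathlib

section
/- Let R be a commutative ring that is either a field or a countable principal ideal domain, and let (M_i, g_i) be an inverse sequence of countably generated R-modules. Then the derived limit lim¹ M_i is either the zero module or is not a countably generated R-module. -/
/-- The Eilenberg map `Δ : ∏ᵢ Mᵢ → ∏ᵢ Mᵢ`, `Δ((mᵢ)ᵢ) = (mᵢ − gᵢ(m_{i+1}))ᵢ`, of an inverse
sequence of `R`-modules `(Mᵢ, gᵢ)`. -/
noncomputable def eilenberg (R : Type) [CommRing R] (M : ℕ → Type)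
    [∀ i, AddCommGroup (M i)] [∀ i, Module R (M i)]
    (g : ∀ i : ℕ, M (i + 1) →ₗ[R] M i) : ((i : ℕ) → M i) →ₗ[R] ((i : ℕ) → M i) where
  toFun x := fun i => x i - g i (x (i + 1))
  map_add' x y := by
    funext i
    simp only [Pi.add_apply, map_add]
    abel
  map_smul' c x := by
    funext i
    simp only [Pi.smul_apply, map_smul, RingHom.id_apply, smul_sub]

/-- The inverse limit `lim Mᵢ` of an inverse sequence, as the kernel of the Eilenberg map. -/
noncomputable def invLim (R : Type) [CommRing R] (M : ℕ → Type)
    [∀ i, AddCommGroup (M i)] [∀ i, Module R (M i)]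
    (g : ∀ i : ℕ, M (i + 1) →ₗ[R] M i) : Submodule R ((i : ℕ) → M i) :=
  LinearMap.ker (eilenberg R M g)

/-- The derived limit `lim¹ Mᵢ` of an inverse sequence, as the cokernel of the Eilenberg map. -/
noncomputable abbrev derivedLim (R : Type) [CommRing R] (M : ℕ → Type)
    [∀ i, AddCommGroup (M i)] [∀ i, Module R (M i)]
    (g : ∀ i : ℕ, M (i + 1) →ₗ[R] M i) : Type :=
  ((i : ℕ) → M i) ⧸ LinearMap.range (eilenberg R M g)

/-- The projection `lim Mᵢ → M_k`. -/
noncomputable def limProj (R : Type) [CommRing R] (M : ℕ → Type)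
    [∀ i, AddCommGroup (M i)] [∀ i, Module R (M i)]
    (g : ∀ i : ℕ, M (i + 1) →ₗ[R] M i) (k : ℕ) : ↥(invLim R M g) →ₗ[R] M k :=
  (LinearMap.proj k).comp (invLim R M g).subtype

/-- The composite bonding map `f_i^{i+j} : M_{i+j} → M_i` of an inverse sequence. -/
noncomputable def transDown (R : Type) [CommRing R] (M : ℕ → Type)
    [∀ i, AddCommGroup (M i)] [∀ i, Module R (M i)]
    (g : ∀ i : ℕ, M (i + 1) →ₗ[R] M i) : (i j : ℕ) → M (i + j) →ₗ[R] M i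
  | _, 0 => LinearMap.id
  | i, j + 1 => (transDown R M g i j).comp (g (i + j))

/-- An inverse sequence satisfies the *Mittag-Leffler condition* if for every `i` the
decreasing sequence of images `range f_i^j ⊆ M_i` is eventually constant. -/
def MittagLeffler (R : Type) [CommRing R] (M : ℕ → Type)
    [∀ i, AddCommGroup (M i)] [∀ i, Module R (M i)]
    (g : ∀ i : ℕ, M (i + 1) →ₗ[R] M i) : Prop :=
  ∀ i : ℕ, ∃ j : ℕ, ∀ k : ℕ,
    LinearMap.range (transDown R M g i (j + k)) = LinearMap.range (transDown R M g i j)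

/-- An inverse sequence is *stable* if it satisfies the Mittag-Leffler condition and the
projections `lim Mᵢ → Mᵢ` are injective for all sufficiently large `i`. -/
def IsStable (R : Type) [CommRing R] (M : ℕ → Type)
    [∀ i, AddCommGroup (M i)] [∀ i, Module R (M i)]
    (g : ∀ i : ℕ, M (i + 1) →ₗ[R] M i) : Prop :=
  MittagLeffler R M g ∧ ∃ i₀ : ℕ, ∀ i : ℕ, i₀ ≤ i → Function.Injective (limProj R M g i)

/-- An `R`-module is *countably generated* if it is the span of a countable subset. -/
def CountablyGeneratedMod (R : Type) (M : Type) [CommRing R] [AddCommGroup M]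
    [Module R M] : Prop :=
  ∃ S : Set M, S.Countable ∧ Submodule.span R S = ⊤

/-!
If the sequence is Mittag-Leffler, `Δ` is onto: subtracting from `y` the image under `Δ` of
suitable partial sums `∑_{k < c i} f_i^{i+k} (y_{i+k})` leaves a section with values in the stable
images, and between stable images the bonding maps are onto, so such a section can be lifted
step by step.

Otherwise the images `f_{i₀}^{i₀+φ n}(M_{i₀+φ n})` strictly decrease for some `i₀` and strictly
increasing `φ`. Choose `u n` in the `n`-th image but not in the next one, with a preimage `v n`.
A coefficient sequence `f` gives the class of `∑ f n • v n` in `lim¹`, and this class vanishes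
only if the series `∑ f n • u n` converges in `M_{i₀}` for the filtration by these images. A limit
of such a series determines the coefficients among sequences whose differences have entries zero
or units. So over a field the kernel of `R^ℕ → lim¹` embeds into `M_{i₀}`, forcing `lim¹` to have
uncountable dimension; over a countable ring the `0/1` sequences in each fibre of `R^ℕ → lim¹`
embed into `M_{i₀}`, forcing `lim¹` to be uncountable.
-/

open LinearMap Submodule Finset

section SumLimits

variable {R A L : Type} [CommRing R] [AddCommGroup A] [Module R A] [AddCommGroup L] [Module R L]
  (B : ℕ → Submodule R A) (u : ℕ → A)

/-- The pairs `(f, s)` such that `s` is a limit of the series `∑ f n • u n` for the filtration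
`B`. -/
def sumLimits : Submodule R ((ℕ → R) × A) :=
  ⨅ N, (B N).comap
    (LinearMap.snd R (ℕ → R) A -
      (∑ n ∈ Finset.range N, (LinearMap.proj n).smulRight (u n)) ∘ₗ LinearMap.fst R (ℕ → R) A)

theorem mem_sumLimits {p : (ℕ → R) × A} :
    p ∈ sumLimits B u ↔ ∀ N, p.2 - ∑ n ∈ Finset.range N, p.1 n • u n ∈ B N := by
  simp [sumLimits]

theorem eq_zero_of_mk_zero_mem_sumLimits {f : ℕ → R} (hf : (f, 0) ∈ sumLimits B u)
    (hstep : ∀ n, f n • u n ∈ B (n + 1) → f n = 0) : f = 0 := by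
  funext n
  induction n using Nat.strong_induction_on with
  | _ n ih =>
    have h := (mem_sumLimits B u).mp hf (n + 1)
    dsimp only at h
    rw [sum_range_succ,
      sum_eq_zero fun m hm => by rw [ih m (mem_range.mp hm), Pi.zero_apply, zero_smul],
      zero_add, zero_sub, neg_mem_iff] at h
    exact hstep n h

theorem indicator_sub_indicator_eq_zero_of_mem_sumLimits {s t : Set ℕ}
    (hu : ∀ n, u n ∉ B (n + 1)) (h : (s.indicator 1 - t.indicator 1, 0) ∈ sumLimits B u) :
    s.indicator (1 : ℕ → R) - t.indicator 1 = 0 := by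
  refine eq_zero_of_mk_zero_mem_sumLimits B u h fun n hn => ?_
  by_cases hs : n ∈ s <;> by_cases ht : n ∈ t <;>
    simp_all [Set.indicator_of_mem, Set.indicator_of_notMem]

theorem countable_of_indicator_sub_mem [Nontrivial R] [Countable A] (hu : ∀ n, u n ∉ B (n + 1))
    {S : Set (Set ℕ)} (hS : ∀ s ∈ S, ∀ t ∈ S,
      s.indicator (1 : ℕ → R) - t.indicator 1 ∈ (sumLimits B u).map (LinearMap.fst R (ℕ → R) A)) :
    S.Countable := by
  rcases S.eq_empty_or_nonempty with rfl | ⟨t₀, ht₀⟩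
  · exact Set.countable_empty
  have ha : ∀ s : S, ∃ a, (s.1.indicator 1 - t₀.indicator 1, a) ∈ sumLimits B u := fun s => by
    obtain ⟨⟨f, a⟩, hp, rfl⟩ := hS s s.2 t₀ ht₀
    exact ⟨a, hp⟩
  choose a ha using ha
  have hinj : Function.Injective a := fun s s' hss' => by
    have hdiff := sub_mem (ha s) (ha s')
    rw [hss', Prod.mk_sub_mk, sub_self, sub_sub_sub_cancel_right] at hdiff
    exact Subtype.ext (Set.indicator_one_inj R
      (sub_eq_zero.mp (indicator_sub_indicator_eq_zero_of_mem_sumLimits B u hu hdiff)))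
  exact Set.countable_coe_iff.mp hinj.countable

theorem not_countable_of_ker_le [Countable A] (hu : ∀ n, u n ∉ B (n + 1))
    (Θ : (ℕ → R) →ₗ[R] L) (hΘ : ker Θ ≤ (sumLimits B u).map (LinearMap.fst R (ℕ → R) A)) :
    ¬ Countable L := by
  intro hL
  have : Nontrivial R := by
    by_contra h
    have := not_nontrivial_iff_subsingleton.mp h
    have := Module.subsingleton R A
    exact hu 0 (Subsingleton.elim 0 (u 0) ▸ zero_mem _)
  have hfiber : ∀ c : L, {s : Set ℕ | Θ (s.indicator 1) = c}.Countable := fun c =>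
    countable_of_indicator_sub_mem B u hu fun s hs t ht => hΘ (by
      rw [mem_ker, map_sub, hs, ht, sub_self])
  have huniv : (Set.univ : Set (Set ℕ)).Countable :=
    (Set.countable_iUnion hfiber).mono fun s _ =>
      Set.mem_iUnion.mpr ⟨Θ (s.indicator 1), rfl⟩
  exact (Cardinal.mk_set_nat ▸ Cardinal.aleph0_lt_continuum).not_ge
    (Cardinal.mk_le_aleph0_iff.mpr (Set.countable_univ_iff.mp huniv))

end SumLimits

section Field

variable {K A L : Type} [Field K] [AddCommGroup A] [Module K A] [AddCommGroup L] [Module K L]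
  (B : ℕ → Submodule K A) (u : ℕ → A)

theorem rank_sumLimits_le (hu : ∀ n, u n ∉ B (n + 1)) :
    Module.rank K (sumLimits B u) ≤ Module.rank K A := by
  refine rank_le_of_injective (LinearMap.snd K (ℕ → K) A ∘ₗ (sumLimits B u).subtype) ?_
  refine (injective_iff_map_eq_zero _).mpr fun ⟨⟨f, s⟩, hp⟩ hs => ?_
  change s = 0 at hs
  subst hs
  have hf : f = 0 := eq_zero_of_mk_zero_mem_sumLimits B u hp fun n hn => by
    by_contra hfn
    exact hu n (by simpa [smul_smul, inv_mul_cancel₀ hfn] using smul_mem _ (f n)⁻¹ hn)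
  simp [hf]

theorem rank_fun_le_of_ker_le (hu : ∀ n, u n ∉ B (n + 1))
    (Θ : (ℕ → K) →ₗ[K] L) (hΘ : ker Θ ≤ (sumLimits B u).map (LinearMap.fst K (ℕ → K) A)) :
    Module.rank K (ℕ → K) ≤ Module.rank K L + Module.rank K A := by
  rw [← rank_range_add_rank_ker Θ]
  exact add_le_add (Submodule.rank_le _)
    ((Submodule.rank_mono hΘ).trans ((rank_map_le _ _).trans (rank_sumLimits_le B u hu)))

theorem aleph0_lt_rank_fun_nat : Cardinal.aleph0 < Module.rank K (ℕ → K) := by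
  rw [rank_fun_infinite]
  calc Cardinal.aleph0 < 2 ^ Cardinal.aleph0 := Cardinal.cantor _
    _ ≤ Cardinal.mk K ^ Cardinal.aleph0 :=
      Cardinal.power_le_power_right (Cardinal.two_le_iff.mpr ⟨0, 1, zero_ne_one⟩)
    _ = Cardinal.mk (ℕ → K) := by rw [← Cardinal.mk_nat, Cardinal.power_def]

end Field

theorem CountablyGeneratedMod.rank_le_aleph0 {R N : Type} [CommRing R] [StrongRankCondition R]
    [AddCommGroup N] [Module R N] (h : CountablyGeneratedMod R N) :
    Module.rank R N ≤ Cardinal.aleph0 := by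
  obtain ⟨S, hS, hspan⟩ := h
  calc Module.rank R N = Module.rank R (span R S) := by rw [hspan, rank_top]
    _ ≤ Cardinal.mk S := rank_span_le S
    _ ≤ Cardinal.aleph0 := Cardinal.mk_le_aleph0_iff.mpr hS.to_subtype

theorem CountablyGeneratedMod.countable {R N : Type} [CommRing R] [Countable R] [AddCommGroup N]
    [Module R N] (h : CountablyGeneratedMod R N) : Countable N := by
  obtain ⟨S, hS, hspan⟩ := h
  have := hS.to_subtype
  have hsurj : Function.Surjective (Finsupp.linearCombination R ((↑) : S → N)) := by
    rw [← LinearMap.range_eq_top, Finsupp.range_linearCombination, Subtype.range_coe, hspan]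
  exact hsurj.countable

namespace InverseSequence

variable {R : Type} [CommRing R] {M : ℕ → Type} [∀ i, AddCommGroup (M i)]
  [∀ i, Module R (M i)] (g : ∀ i : ℕ, M (i + 1) →ₗ[R] M i)

theorem range_transDown_antitone (i : ℕ) : Antitone fun j => range (transDown R M g i j) :=
  antitone_nat_of_succ_le fun _ => range_comp_le_range _ _

/-- Stated on sections `y` of `∏ Mₙ` to avoid transporting along `i + 1 + k = i + (k + 1)`. -/
theorem g_transDown_apply (i k : ℕ) (y : ∀ n, M n) :
    g i (transDown R M g (i + 1) k (y (i + 1 + k))) =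
      transDown R M g i (k + 1) (y (i + (k + 1))) := by
  induction k generalizing y with
  | zero => rfl
  | succ k ih => exact ih fun n => g n (y (n + 1))

theorem range_transDown_succ (i j : ℕ) :
    range (transDown R M g i (j + 1)) = (range (transDown R M g (i + 1) j)).map (g i) := by
  ext x
  constructor
  · rintro ⟨m, rfl⟩
    refine ⟨transDown R M g (i + 1) j (Pi.single (i + (j + 1)) m (i + 1 + j)), ⟨_, rfl⟩, ?_⟩
    rw [g_transDown_apply, Pi.single_eq_same]
  · rintro ⟨_, ⟨m, rfl⟩, rfl⟩
    refine ⟨Pi.single (i + 1 + j) m (i + (j + 1)), ?_⟩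
    rw [← g_transDown_apply, Pi.single_eq_same]

noncomputable def partialSum (i J : ℕ) : (∀ n, M n) →ₗ[R] M i :=
  ∑ j ∈ range J, transDown R M g i j ∘ₗ LinearMap.proj (i + j)

theorem partialSum_apply (i J : ℕ) (y : ∀ n, M n) :
    partialSum g i J y = ∑ j ∈ range J, transDown R M g i j (y (i + j)) := by
  simp [partialSum]

theorem partialSum_eilenberg (i J : ℕ) (x : ∀ n, M n) :
    partialSum g i J (eilenberg R M g x) = x i - transDown R M g i J (x (i + J)) := by
  rw [partialSum_apply]
  exact (sum_congr rfl fun j _ => map_sub _ _ _).trans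
    (sum_range_sub' (fun j => transDown R M g i j (x (i + j))) J)

theorem g_partialSum (i J : ℕ) (y : ∀ n, M n) :
    g i (partialSum g (i + 1) J y) = partialSum g i (J + 1) y - y i := by
  simp only [partialSum_apply, map_sum, g_transDown_apply, sum_range_succ' _ J]
  exact (add_sub_cancel_right _ _).symm

theorem partialSum_sub_mem_range {i J J' : ℕ} (h : J ≤ J') (y : ∀ n, M n) :
    partialSum g i J' y - partialSum g i J y ∈ range (transDown R M g i J) := by
  rw [partialSum_apply, partialSum_apply, ← sum_Ico_eq_sub _ h]
  exact sum_mem fun k hk =>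
    range_transDown_antitone g i (mem_Ico.mp hk).1 ⟨y (i + k), rfl⟩

theorem partialSum_congr (i J : ℕ) {y y' : ∀ n, M n} (h : ∀ j < J, y (i + j) = y' (i + j)) :
    partialSum g i J y = partialSum g i J y' := by
  simp only [partialSum_apply]
  exact sum_congr rfl fun j hj => by rw [h j (mem_range.mp hj)]

theorem partialSum_single (i J a : ℕ) (w : M (i + a)) :
    partialSum g i J (Pi.single (i + a) w) = if a < J then transDown R M g i a w else 0 := by
  have hoff : ∀ j ≠ a, transDown R M g i j (Pi.single (i + a) w (i + j)) = 0 := fun j hj => by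
    rw [Pi.single_eq_of_ne (by omega), map_zero]
  rw [partialSum_apply]
  split_ifs with ha
  · rw [sum_eq_single_of_mem a (mem_range.mpr ha) fun j _ => hoff j, Pi.single_eq_same]
  · exact sum_eq_zero fun j hj => hoff j fun hja => ha (hja ▸ mem_range.mp hj)

theorem mem_range_eilenberg_of_forall_mem (N : ∀ i, Submodule R (M i))
    (hN : ∀ i, N i ≤ (N (i + 1)).map (g i)) {y : ∀ i, M i} (hy : ∀ i, y i ∈ N i) :
    y ∈ range (eilenberg R M g) := by
  have hlift : ∀ i (a : {a : M i // a ∈ N i}), ∃ b : {b : M (i + 1) // b ∈ N (i + 1)},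
      g i b = a - y i := fun i a => by
    obtain ⟨b, hb, hba⟩ := hN i (sub_mem a.2 (hy i))
    exact ⟨⟨b, hb⟩, hba⟩
  choose lift hlift using hlift
  let x : ∀ i, {a : M i // a ∈ N i} := fun i => Nat.rec ⟨0, zero_mem _⟩ lift i
  refine ⟨fun i => (x i).1, funext fun i => ?_⟩
  change (x i).1 - g i (lift i (x i)) = y i
  rw [hlift, sub_sub_cancel]

theorem exists_monotone_stable_index (hml : MittagLeffler R M g) :
    ∃ c : ℕ → ℕ, Monotone c ∧
      ∀ i j, c i ≤ j → range (transDown R M g i j) = range (transDown R M g i (c i)) := by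
  choose s hs using hml
  have hstable : ∀ i j, s i ≤ j → range (transDown R M g i j) = range (transDown R M g i (s i)) :=
    fun i j hj => by obtain ⟨k, rfl⟩ := Nat.exists_eq_add_of_le hj; exact hs i k
  refine ⟨fun i => (Finset.range (i + 1)).sup s,
    fun i i' h => sup_mono (range_subset_range.mpr (by omega)), fun i j hj => ?_⟩
  have hsi : s i ≤ (Finset.range (i + 1)).sup s := le_sup (self_mem_range_succ i)
  rw [hstable i j (hsi.trans hj), hstable i _ hsi]

theorem range_eilenberg_eq_top_of_mittagLeffler (hml : MittagLeffler R M g) :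
    range (eilenberg R M g) = ⊤ := by
  obtain ⟨c, hc, hstable⟩ := exists_monotone_stable_index g hml
  let N : ∀ i, Submodule R (M i) := fun i => range (transDown R M g i (c i))
  have hN : ∀ i, N i ≤ (N (i + 1)).map (g i) := fun i => by
    rw [← range_transDown_succ, hstable i _ ((hc (Nat.le_succ i)).trans (Nat.le_succ _))]
  refine eq_top_iff.mpr fun y _ => ?_
  let q : ∀ i, M i := fun i => partialSum g i (c i) y
  have hres : ∀ i, (y - eilenberg R M g q) i ∈ N i := fun i => by
    have : (y - eilenberg R M g q) i =
        partialSum g i (c (i + 1) + 1) y - partialSum g i (c i) y := by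
      change y i - (q i - g i (q (i + 1))) = _
      rw [g_partialSum]
      abel
    exact this ▸ partialSum_sub_mem_range g ((hc (Nat.le_succ i)).trans (Nat.le_succ _)) y
  simpa using add_mem (mem_range_eilenberg_of_forall_mem g N hN hres) (mem_range_self _ q)

theorem exists_notMem_of_not_mittagLeffler (hml : ¬ MittagLeffler R M g) :
    ∃ (i₀ : ℕ) (φ : ℕ → ℕ) (u : ℕ → M i₀), StrictMono φ ∧
      (∀ n, u n ∈ range (transDown R M g i₀ (φ n))) ∧
      ∀ n, u n ∉ range (transDown R M g i₀ (φ (n + 1))) := by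
  simp only [MittagLeffler, not_forall, not_exists] at hml
  obtain ⟨i₀, hi₀⟩ := hml
  have hdrop : ∀ j, ∃ j', j < j' ∧
      range (transDown R M g i₀ j') < range (transDown R M g i₀ j) := fun j => by
    obtain ⟨k, hk⟩ := hi₀ j
    refine ⟨j + k, Nat.lt_add_of_pos_right (Nat.pos_of_ne_zero ?_),
      lt_of_le_of_ne (range_transDown_antitone g i₀ (Nat.le_add_right j k)) hk⟩
    rintro rfl
    exact hk rfl
  choose next hnext_gt hnext_lt using hdrop
  let φ : ℕ → ℕ := fun n => next^[n] 0
  have hφ : ∀ n, φ (n + 1) = next (φ n) := fun n => Function.iterate_succ_apply' next n 0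
  have hu : ∀ n, ∃ u, u ∈ range (transDown R M g i₀ (φ n)) ∧
      u ∉ range (transDown R M g i₀ (φ (n + 1))) := fun n => by
    rw [hφ]
    exact SetLike.exists_of_lt (hnext_lt (φ n))
  choose u hu using hu
  exact ⟨i₀, φ, u, strictMono_nat_of_lt_succ fun n => hφ n ▸ hnext_gt (φ n),
    fun n => (hu n).1, fun n => (hu n).2⟩

section LiftSeq

variable {i₀ : ℕ} {φ : ℕ → ℕ} (v : ∀ n, M (i₀ + φ n))

/-- The section with `f n • v n` in position `i₀ + φ n` and `0` elsewhere; for strictly monotone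
`φ`, the only `n` with `i₀ + φ n = k` satisfies `n ≤ k`. -/
noncomputable def liftSeq : (ℕ → R) →ₗ[R] ∀ k, M k :=
  LinearMap.pi fun k =>
    ∑ n ∈ Finset.range (k + 1), (LinearMap.proj n).smulRight (Pi.single (i₀ + φ n) (v n) k)

variable {v}

theorem liftSeq_apply_eq_sum (hφ : StrictMono φ) (f : ℕ → R) (k : ℕ) {s : Finset ℕ}
    (hs : ∀ n, i₀ + φ n = k → n ∈ s) :
    liftSeq v f k = ∑ n ∈ s, f n • Pi.single (i₀ + φ n) (v n) k := by
  have hfin : ∀ t : Finset ℕ, (∀ n, i₀ + φ n = k → n ∈ t) →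
      ∑ n ∈ t, f n • Pi.single (i₀ + φ n) (v n) k = ∑ᶠ n, f n • Pi.single (i₀ + φ n) (v n) k :=
    fun t ht => (finsum_eq_sum_of_support_subset _ fun n hn => ht n (by
      by_contra h
      exact hn (by dsimp only; rw [Pi.single_eq_of_ne (Ne.symm h), smul_zero]))).symm
  have hk : ∀ n, i₀ + φ n = k → n ∈ Finset.range (k + 1) := fun n hn =>
    mem_range.mpr (by have : n ≤ φ n := hφ.id_le n; omega)
  rw [hfin s hs, ← hfin _ hk]
  simp [liftSeq]

theorem partialSum_liftSeq (hφ : StrictMono φ) {u : ℕ → M i₀}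
    (hv : ∀ n, transDown R M g i₀ (φ n) (v n) = u n) (f : ℕ → R) (N : ℕ) :
    partialSum g i₀ (φ N) (liftSeq v f) = ∑ n ∈ Finset.range N, f n • u n := by
  rw [partialSum_congr g i₀ (φ N)
    (y' := ∑ n ∈ Finset.range N, f n • Pi.single (i₀ + φ n) (v n)) fun j hj => ?_]
  · simp only [map_sum, map_smul, partialSum_single, hφ.lt_iff_lt]
    exact sum_congr rfl fun n hn => by rw [if_pos (mem_range.mp hn), hv]
  · rw [liftSeq_apply_eq_sum hφ f _ fun n hn =>
      mem_range.mpr (hφ.lt_iff_lt.mp (show φ n < φ N by omega))]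
    simp [Finset.sum_apply]

theorem ker_mkQ_comp_liftSeq_le (hφ : StrictMono φ) {u : ℕ → M i₀}
    (hv : ∀ n, transDown R M g i₀ (φ n) (v n) = u n) :
    ker ((range (eilenberg R M g)).mkQ ∘ₗ liftSeq v) ≤
      (sumLimits (fun N => range (transDown R M g i₀ (φ N))) u).map
        (LinearMap.fst R (ℕ → R) (M i₀)) := by
  intro f hf
  obtain ⟨x, hx⟩ : liftSeq v f ∈ range (eilenberg R M g) := by
    simpa only [mem_ker, comp_apply, mkQ_apply, Quotient.mk_eq_zero] using hf
  refine ⟨(f, x i₀), (mem_sumLimits _ u).mpr fun N => ?_, rfl⟩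
  rw [← partialSum_liftSeq g hφ hv, ← hx, partialSum_eilenberg, sub_sub_cancel]
  exact mem_range_self _ _

end LiftSeq

end InverseSequence

open InverseSequence

/-- Let `R` be a field or a countable PID, and let `(Mᵢ, gᵢ)` be an inverse sequence of
countably generated `R`-modules.  Then the derived limit `lim¹ Mᵢ` is either zero or not
countably generated as an `R`-module. -/
theorem derivedLim_zero_or_not_countablyGenerated
    (R : Type) [CommRing R]
    (hR : IsField R ∨ (Countable R ∧ IsDomain R ∧ IsPrincipalIdealRing R))
    (M : ℕ → Type) [∀ i, AddCommGroup (M i)] [∀ i, Module R (M i)]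
    (g : ∀ i : ℕ, M (i + 1) →ₗ[R] M i)
    (hcg : ∀ i : ℕ, CountablyGeneratedMod R (M i)) :
    Subsingleton (derivedLim R M g) ∨ ¬ CountablyGeneratedMod R (derivedLim R M g) := by
  by_cases hml : MittagLeffler R M g
  · exact Or.inl (Submodule.Quotient.subsingleton_iff.mpr
      (range_eilenberg_eq_top_of_mittagLeffler g hml))
  refine Or.inr fun hL => ?_
  obtain ⟨i₀, φ, u, hφ, hu_mem, hu_not⟩ := exists_notMem_of_not_mittagLeffler g hml
  choose v hv using hu_mem
  have hΘ := ker_mkQ_comp_liftSeq_le g hφ hv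
  rcases hR with hR | ⟨hR, -, -⟩
  · let _ : Field R := hR.toField
    have hrank := rank_fun_le_of_ker_le _ u hu_not _ hΘ
    have hsum := add_le_add hL.rank_le_aleph0 (hcg i₀).rank_le_aleph0
    rw [Cardinal.aleph0_add_aleph0] at hsum
    exact (aleph0_lt_rank_fun_nat.trans_le (hrank.trans hsum)).false
  · have := (hcg i₀).countable
    exact not_countable_of_ker_le _ u hu_not _ hΘ hL.countable
end

section
/- Let R be a principal ideal domain, let (M_i, g_i) be a stable inverse sequence of R-modules with inverse limit M := lim M_i, and let N be an R-module. Then the canonical R-linear map Φ : lim→ Hom_R(M_i, N) → Hom_R(M, N), from the direct limit of the dual system (with transition maps given by precomposition with the bonding maps) and induced by precomposition with the projections f_i : M → M_i, is an isomorphism. -/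
/-- The composite bonding map `f_i^j : M_j → M_i` (for `i ≤ j`) of an inverse sequence. -/
noncomputable def transLE (R : Type) [CommRing R] (M : ℕ → Type)
    [∀ i, AddCommGroup (M i)] [∀ i, Module R (M i)]
    (g : ∀ i : ℕ, M (i + 1) →ₗ[R] M i) (i j : ℕ) (h : i ≤ j) : M j →ₗ[R] M i :=
  Nat.leRecOn h (fun {k} (f : M k →ₗ[R] M i) => f.comp (g k)) LinearMap.id

theorem transLE_apply_of_mem_invLim (R : Type) [CommRing R] (M : ℕ → Type)
    [∀ i, AddCommGroup (M i)] [∀ i, Module R (M i)]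
    (g : ∀ i : ℕ, M (i + 1) →ₗ[R] M i) (x : (i : ℕ) → M i) (hx : x ∈ invLim R M g)
    (i : ℕ) : ∀ (j : ℕ) (h : i ≤ j), transLE R M g i j h (x j) = x i := by
  have hg : ∀ m : ℕ, g m (x (m + 1)) = x m := by
    intro m
    have : eilenberg R M g x = 0 := hx
    have h2 := congrFun this m
    have h3 : x m - g m (x (m + 1)) = 0 := h2
    have := sub_eq_zero.mp h3
    exact this.symm
  intro j h
  induction j, h using Nat.le_induction with
  | base => simp [transLE, Nat.leRecOn_self]
  | succ j hij ih =>
      rw [transLE, Nat.leRecOn_succ hij, LinearMap.comp_apply, hg j]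
      exact ih

/-- The canonical map `lim→ Hom(Mᵢ, N) → Hom(lim Mᵢ, N)`, given on the `i`-th component of
the direct limit by precomposition with the projection `fᵢ : lim Mᵢ → Mᵢ`. -/
noncomputable def homLimCanonical (R : Type) [CommRing R] (M : ℕ → Type)
    [∀ i, AddCommGroup (M i)] [∀ i, Module R (M i)]
    (g : ∀ i : ℕ, M (i + 1) →ₗ[R] M i) (N : Type) [AddCommGroup N] [Module R N] :
    Module.DirectLimit (fun i => M i →ₗ[R] N)
        (fun i j hij => LinearMap.lcomp R N (transLE R M g i j hij)) →ₗ[R]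
      (↥(invLim R M g) →ₗ[R] N) :=
  Module.DirectLimit.lift R ℕ (fun i => M i →ₗ[R] N)
    (fun i j hij => LinearMap.lcomp R N (transLE R M g i j hij))
    (fun i => LinearMap.lcomp R N (limProj R M g i))
    (fun i j hij α => by
      ext x
      simp only [LinearMap.lcomp_apply, LinearMap.comp_apply, limProj,
        LinearMap.proj_apply, Submodule.subtype_apply]
      exact congrArg α (transLE_apply_of_mem_invLim R M g x.1 x.2 i j hij))


/-!
Under the Mittag-Leffler condition every element of the stable image `⋂ⱼ range f_i^j` lifts
step by step along the bonding maps, hence comes from the limit; and the stable image is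
`range f_i^j` for a single `j`. Injectivity follows: if `α ∘ fᵢ = 0` then `α ∘ f_i^j = 0`, so
`α` dies in the direct limit. For surjectivity, injectivity of `f_{i₀}` lets `f_{i₀}^j` factor
through the limit as `f_{i₀} ∘ π`, and then `π` is a retraction of `f_j`, so every
`φ : lim Mᵢ → N` equals `(φ ∘ π) ∘ f_j`.
-/

theorem LinearMap.exists_comp_eq_of_range_le {R L M P : Type*} [Semiring R]
    [AddCommMonoid L] [AddCommMonoid M] [AddCommMonoid P] [Module R L] [Module R M] [Module R P]
    {f : L →ₗ[R] M} (hf : Function.Injective f) {t : P →ₗ[R] M} (h : range t ≤ range f) :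
    ∃ π : P →ₗ[R] L, f ∘ₗ π = t :=
  ⟨(LinearEquiv.ofInjective f hf).symm ∘ₗ t.codRestrict (range f) fun y => h ⟨y, rfl⟩, by
    ext y
    simp [LinearEquiv.ofInjective_symm_apply]⟩

section InverseSequence

variable {R : Type} [CommRing R] {M : ℕ → Type} [∀ i, AddCommGroup (M i)] [∀ i, Module R (M i)]
  (g : ∀ i : ℕ, M (i + 1) →ₗ[R] M i)

open LinearMap (range)

theorem mem_invLim_iff {x : (i : ℕ) → M i} : x ∈ invLim R M g ↔ ∀ i, g i (x (i + 1)) = x i := by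
  simp only [invLim, LinearMap.mem_ker, eilenberg, LinearMap.coe_mk, AddHom.coe_mk, funext_iff,
    Pi.zero_apply, sub_eq_zero]
  exact forall_congr' fun i => eq_comm

theorem transLE_apply_self {i : ℕ} (h : i ≤ i) (x : M i) : transLE R M g i i h x = x := by
  rw [transLE, Nat.leRecOn_self]
  rfl

theorem transLE_apply_succ {i j : ℕ} (h : i ≤ j) (h' : i ≤ j + 1) (x : M (j + 1)) :
    transLE R M g i (j + 1) h' x = transLE R M g i j h (g j x) := by
  rw [transLE, Nat.leRecOn_succ h]
  rfl

theorem transLE_apply_transLE {i j k : ℕ} (hij : i ≤ j) (hjk : j ≤ k) (hik : i ≤ k) (x : M k) :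
    transLE R M g i j hij (transLE R M g j k hjk x) = transLE R M g i k hik x := by
  induction k, hjk using Nat.le_induction with
  | base => rw [transLE_apply_self]
  | succ k hjk ih => rw [transLE_apply_succ g hjk, transLE_apply_succ g (hij.trans hjk), ih]

theorem g_apply_transLE {i k : ℕ} (h : i + 1 ≤ k) (h' : i ≤ k) (x : M k) :
    g i (transLE R M g (i + 1) k h x) = transLE R M g i k h' x := by
  rw [← transLE_apply_transLE g i.le_succ h h', transLE_apply_succ g le_rfl, transLE_apply_self]

theorem range_transLE_antitone {i j k : ℕ} (hij : i ≤ j) (hjk : j ≤ k) (hik : i ≤ k) :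
    range (transLE R M g i k hik) ≤ range (transLE R M g i j hij) := by
  rintro _ ⟨y, rfl⟩
  exact ⟨transLE R M g j k hjk y, transLE_apply_transLE g hij hjk hik y⟩

theorem transDown_eq_transLE (i j : ℕ) :
    transDown R M g i j = transLE R M g i (i + j) (Nat.le_add_right i j) := by
  induction j with
  | zero => ext x; exact (transLE_apply_self g _ x).symm
  | succ j ih =>
    ext x
    rw [transDown, LinearMap.comp_apply, ih]
    exact (transLE_apply_succ g (Nat.le_add_right i j) _ x).symm

theorem transLE_comp_limProj {i j : ℕ} (h : i ≤ j) :
    transLE R M g i j h ∘ₗ limProj R M g j = limProj R M g i := by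
  ext x
  exact transLE_apply_of_mem_invLim R M g x.1 x.2 i j h

noncomputable def stableImage (i : ℕ) : Submodule R (M i) :=
  ⨅ (j : ℕ) (h : i ≤ j), range (transLE R M g i j h)

theorem stableImage_eq_range_of_mittagLeffler (hML : MittagLeffler R M g) (i : ℕ) :
    ∃ (j : ℕ) (h : i ≤ j), stableImage g i = range (transLE R M g i j h) := by
  obtain ⟨d, hd⟩ := hML i
  refine ⟨i + d, Nat.le_add_right i d, le_antisymm (iInf₂_le _ _) (le_iInf₂ fun k hik => ?_)⟩
  rcases le_total k (i + d) with hk | hk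
  · exact range_transLE_antitone g hik hk _
  · obtain ⟨e, rfl⟩ : ∃ e, k = i + (d + e) := ⟨k - (i + d), by omega⟩
    have := hd e
    rw [transDown_eq_transLE, transDown_eq_transLE] at this
    exact this.ge

theorem stableImage_le_map_of_mittagLeffler (hML : MittagLeffler R M g) (i : ℕ) :
    stableImage g i ≤ (stableImage g (i + 1)).map (g i) := by
  intro m hm
  obtain ⟨j, hj, hstable⟩ := stableImage_eq_range_of_mittagLeffler g hML (i + 1)
  have hk : i + 1 ≤ max j (i + 1) := le_max_right _ _
  obtain ⟨y, rfl⟩ := (Submodule.mem_iInf _).1 ((Submodule.mem_iInf _).1 hm _) (i.le_succ.trans hk)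
  refine ⟨transLE R M g (i + 1) _ hk y, ?_, g_apply_transLE g hk _ y⟩
  rw [hstable]
  exact range_transLE_antitone g hj (le_max_left _ _) hk ⟨y, rfl⟩

theorem exists_mem_invLim_apply_eq (S : ∀ i, Set (M i))
    (hS : ∀ i, ∀ m ∈ S i, ∃ m' ∈ S (i + 1), g i m' = m) {i : ℕ} {m : M i} (hm : m ∈ S i) :
    ∃ x ∈ invLim R M g, x i = m := by
  choose lift lift_mem g_lift using hS
  let t : (k : ℕ) → S (i + k) :=
    fun k => Nat.rec ⟨m, hm⟩ (fun k p => ⟨lift (i + k) p.1 p.2, lift_mem _ _ _⟩) k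
  have g_t : ∀ k, g (i + k) (t (k + 1)).1 = (t k).1 := fun k => g_lift (i + k) (t k).1 (t k).2
  -- reading the chain `t` from index `i + n` down to `n` handles `n < i` and `n ≥ i` alike
  refine ⟨fun n => transLE R M g n (i + n) (Nat.le_add_left n i) (t n).1, ?_, ?_⟩
  · refine (mem_invLim_iff g).2 fun n => ?_
    exact (g_apply_transLE g _ (by omega) _).trans
      ((transLE_apply_succ g (Nat.le_add_left n i) _ _).trans (congrArg _ (g_t n)))
  · suffices ∀ k, transLE R M g i (i + k) (Nat.le_add_right i k) (t k).1 = m from this i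
    intro k
    induction k with
    | zero => exact transLE_apply_self g _ m
    | succ k ih => rw [← ih, ← g_t k]; exact transLE_apply_succ g _ _ _

theorem exists_range_transLE_le_range_limProj (hML : MittagLeffler R M g) (i : ℕ) :
    ∃ (j : ℕ) (h : i ≤ j), range (transLE R M g i j h) ≤ range (limProj R M g i) := by
  obtain ⟨j, hj, hstable⟩ := stableImage_eq_range_of_mittagLeffler g hML i
  refine ⟨j, hj, hstable ▸ fun m hm => ?_⟩
  obtain ⟨x, hx, rfl⟩ := exists_mem_invLim_apply_eq g (fun i => stableImage g i)
    (stableImage_le_map_of_mittagLeffler g hML) hm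
  exact ⟨⟨x, hx⟩, rfl⟩

theorem exists_comp_limProj_eq_id_of_isStable (hstable : IsStable R M g) :
    ∃ (j : ℕ) (π : M j →ₗ[R] invLim R M g), π ∘ₗ limProj R M g j = LinearMap.id := by
  obtain ⟨hML, i, hinj⟩ := hstable
  obtain ⟨j, hij, hrange⟩ := exists_range_transLE_le_range_limProj g hML i
  obtain ⟨π, hπ⟩ := LinearMap.exists_comp_eq_of_range_le (hinj i le_rfl) hrange
  have hπ' : limProj R M g i ∘ₗ π ∘ₗ limProj R M g j = limProj R M g i := by
    rw [← LinearMap.comp_assoc, hπ, transLE_comp_limProj]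
  exact ⟨j, π, LinearMap.ext fun x => hinj i le_rfl (LinearMap.congr_fun hπ' x)⟩

end InverseSequence

section HomLimCanonical

variable {R : Type} [CommRing R] {M : ℕ → Type} [∀ i, AddCommGroup (M i)] [∀ i, Module R (M i)]
  {g : ∀ i : ℕ, M (i + 1) →ₗ[R] M i} {N : Type} [AddCommGroup N] [Module R N]

theorem homLimCanonical_of (i : ℕ) (α : M i →ₗ[R] N) :
    homLimCanonical R M g N (Module.DirectLimit.of R ℕ _ _ i α) = α ∘ₗ limProj R M g i :=
  Module.DirectLimit.lift_of ..

theorem homLimCanonical_injective (hML : MittagLeffler R M g) :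
    Function.Injective (homLimCanonical R M g N) := by
  refine (injective_iff_map_eq_zero _).2 fun z hz => ?_
  obtain ⟨i, α, rfl⟩ := Module.DirectLimit.exists_of z
  obtain ⟨j, hij, hrange⟩ := exists_range_transLE_le_range_limProj g hML i
  have hα : α ∘ₗ transLE R M g i j hij = 0 := by
    ext y
    obtain ⟨x, hx⟩ := hrange ⟨y, rfl⟩
    simpa [← hx, homLimCanonical_of] using LinearMap.congr_fun hz x
  rw [← Module.DirectLimit.of_f (hij := hij), LinearMap.lcomp_apply', hα, map_zero]

theorem homLimCanonical_surjective (hstable : IsStable R M g) :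
    Function.Surjective (homLimCanonical R M g N) := by
  obtain ⟨j, π, hπ⟩ := exists_comp_limProj_eq_id_of_isStable g hstable
  refine fun φ => ⟨Module.DirectLimit.of R ℕ _ _ j (φ ∘ₗ π), ?_⟩
  rw [homLimCanonical_of, LinearMap.comp_assoc, hπ, LinearMap.comp_id]

end HomLimCanonical

theorem homLimCanonical_bijective_of_stable_general
    (R : Type) [CommRing R]
    (M : ℕ → Type) [∀ i, AddCommGroup (M i)] [∀ i, Module R (M i)]
    (g : ∀ i : ℕ, M (i + 1) →ₗ[R] M i)
    (N : Type) [AddCommGroup N] [Module R N]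
    (hstable : IsStable R M g) :
    Function.Bijective (homLimCanonical R M g N) :=
  ⟨homLimCanonical_injective hstable.1, homLimCanonical_surjective hstable⟩

/-- Let `R` be a PID, `(Mᵢ, gᵢ)` a stable inverse sequence of `R`-modules with inverse limit
`M`, and `N` an `R`-module.  Then the canonical map
`lim→ Hom_R(Mᵢ, N) → Hom_R(M, N)` is an isomorphism. -/
theorem homLimCanonical_bijective_of_stable
    (R : Type) [CommRing R] [IsDomain R] [IsPrincipalIdealRing R]
    (M : ℕ → Type) [∀ i, AddCommGroup (M i)] [∀ i, Module R (M i)]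
    (g : ∀ i : ℕ, M (i + 1) →ₗ[R] M i)
    (N : Type) [AddCommGroup N] [Module R N]
    (hstable : IsStable R M g) :
    Function.Bijective (homLimCanonical R M g N) :=
  homLimCanonical_bijective_of_stable_general R M g N hstable
end
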